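/- The relation ≺ on a family K of pairwise disjoint continua horizontally crossing the unit square, defined by K₁ ≺ K₂ iff max pr₂(K₁ ∩ ℓ) < max pr₂(K₂ ∩ ℓ) for some (equivalently, every) vertical segment ℓ = {x}×[0,1], is a strict total order on K. -/

import Mathlib

open Set

/-- The unit square `Q = [0,1]²`. -/
def unitSq : Set (ℝ × ℝ) := Icc (0:ℝ) 1 ×ˢ Icc (0:ℝ) 1

/-- The bottom horizontal side of `Q`. -/
def botSide : Set (ℝ × ℝ) := Icc (0:ℝ) 1 ×ˢ {(0:ℝ)}

/-- The top horizontal side of `Q`. -/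
def topSide : Set (ℝ × ℝ) := Icc (0:ℝ) 1 ×ˢ {(1:ℝ)}

/-- A continuum `K ⊆ Q` crosses the unit square horizontally: the two horizontal sides of
`Q` lie in different connected components of `Q ∖ K`. -/
def CrossesHorizontally (K : Set (ℝ × ℝ)) : Prop :=
  IsCompact K ∧ IsConnected K ∧ K ⊆ unitSq ∧ Disjoint K (botSide ∪ topSide) ∧
  ∀ p ∈ botSide, ∀ q ∈ topSide,
    connectedComponentIn (unitSq \ K) p ≠ connectedComponentIn (unitSq \ K) q

/-- The maximal height of `K` over the vertical segment `{x} × [0,1]`. -/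
noncomputable def maxHt (K : Set (ℝ × ℝ)) (x : ℝ) : ℝ := sSup {y : ℝ | (x, y) ∈ K}

/-- `K₁ ≺ K₂` iff over some vertical segment the maximal height of `K₁` is less than that
of `K₂`. -/
def HtLT (K₁ K₂ : Set (ℝ × ℝ)) : Prop := ∃ x ∈ Icc (0:ℝ) 1, maxHt K₁ x < maxHt K₂ x


/-! Disjoint crossing continua are nested. Over a column where `K₁` is lower, `K₂` reaches
into the component of `Q ∖ K₁` containing the top side; being connected, all of `K₂` lies there,
so the bottom component of `Q ∖ K₁` misses `K₂` and sits inside the bottom component of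
`Q ∖ K₂`. If the order were reversed over another column, the two bottom components would
coincide. A common component is relatively open in `Q` (as is every component of `Q ∖ K` for
closed `K`, by convexity of `Q`), and its closure adds only points of `K₁` and only points of
`K₂`, hence none: it would be clopen in the connected square and still miss `K₁`. -/

open Topology Metric

section ConnectedComponents

variable {α : Type*} [TopologicalSpace α]

theorem disjoint_connectedComponentIn_of_ne {F : Set α} {x y : α}
    (h : connectedComponentIn F x ≠ connectedComponentIn F y) :
    Disjoint (connectedComponentIn F x) (connectedComponentIn F y) :=
  disjoint_left.2 fun _ hx hy =>
    h ((connectedComponentIn_eq hx).trans (connectedComponentIn_eq hy).symm)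

theorem closure_connectedComponentIn_sdiff_subset {S : Set α} (hS : IsClosed S) (K : Set α)
    (p : α) :
    closure (connectedComponentIn (S \ K) p) ⊆ connectedComponentIn (S \ K) p ∪ K := by
  set C := connectedComponentIn (S \ K) p
  intro z hz
  refine or_iff_not_imp_right.2 fun hzK => ?_
  obtain ⟨w, hw⟩ := closure_nonempty_iff.1 ⟨z, hz⟩
  have hzS : z ∈ S \ K :=
    ⟨closure_minimal ((connectedComponentIn_subset _ _).trans sdiff_subset) hS hz, hzK⟩
  have hins : IsPreconnected (insert z C) :=
    isPreconnected_connectedComponentIn.subset_closure (subset_insert z C)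
      (insert_subset hz subset_closure)
  have := hins.subset_connectedComponentIn (mem_insert_of_mem z hw)
    (insert_subset hzS (connectedComponentIn_subset _ _)) (mem_insert z C)
  rwa [← connectedComponentIn_eq hw] at this

theorem IsPreconnected.subset_of_isClosed_of_mem_nhdsWithin {S C : Set α}
    (hS : IsPreconnected S) (hC : IsClosed C) (hCS : ∀ x ∈ C, C ∈ 𝓝[S] x) {p : α}
    (hp : p ∈ S ∩ C) : S ⊆ C := by
  intro q hq
  have hlocal : ∀ x ∈ S, ∀ᶠ y in 𝓝[S] x, (x ∈ C ↔ y ∈ C) := by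
    intro x _
    by_cases hx : x ∈ C
    · filter_upwards [hCS x hx] with y hy using iff_of_true hx hy
    · filter_upwards [nhdsWithin_le_nhds (hC.isOpen_compl.mem_nhds hx)] with y hy
        using iff_of_false hx hy
  exact (hS.induction₂ (fun x y => x ∈ C ↔ y ∈ C) hlocal (fun _ _ _ _ _ _ => Iff.trans)
    (fun _ _ _ _ => Iff.symm) hp.1 hq).1 hp.2

end ConnectedComponents

section Convex

variable {E : Type*} [SeminormedAddCommGroup E] [NormedSpace ℝ E]

theorem Convex.connectedComponentIn_sdiff_mem_nhdsWithin {S K : Set E} (hS : Convex ℝ S)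
    (hK : IsClosed K) {p b : E} (hb : b ∈ connectedComponentIn (S \ K) p) :
    connectedComponentIn (S \ K) p ∈ 𝓝[S] b := by
  obtain ⟨r, hr, hball⟩ := isOpen_iff.1 hK.isOpen_compl b
    (connectedComponentIn_subset _ _ hb).2
  have hsub : S ∩ ball b r ⊆ S \ K := fun z hz => ⟨hz.1, hball hz.2⟩
  have := (hS.inter (convex_ball b r)).isPreconnected.subset_connectedComponentIn
    ⟨(connectedComponentIn_subset _ _ hb).1, mem_ball_self hr⟩ hsub
  rw [← connectedComponentIn_eq hb] at this
  exact Filter.mem_of_superset (inter_mem_nhdsWithin S (ball_mem_nhds b hr)) this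

theorem Convex.connectedComponentIn_sdiff_ne_of_disjoint {S K₁ K₂ : Set E} (hS : Convex ℝ S)
    (hSc : IsClosed S) (hK₁ : IsClosed K₁) (hK : Disjoint K₁ K₂) (hSK₁ : (S ∩ K₁).Nonempty)
    {p : E} (hp : p ∈ S \ K₁) :
    connectedComponentIn (S \ K₁) p ≠ connectedComponentIn (S \ K₂) p := by
  intro heq
  set C := connectedComponentIn (S \ K₁) p
  have h₁ := closure_connectedComponentIn_sdiff_subset hSc K₁ p
  have h₂ := closure_connectedComponentIn_sdiff_subset hSc K₂ p
  rw [← heq] at h₂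
  have hC : IsClosed C := closure_subset_iff_isClosed.1 fun z hz =>
    (h₁ hz).elim id fun hz₁ => (h₂ hz).elim id fun hz₂ => absurd hz₂ (disjoint_left.1 hK hz₁)
  obtain ⟨q, hqS, hqK⟩ := hSK₁
  have hSC : S ⊆ C := hS.isPreconnected.subset_of_isClosed_of_mem_nhdsWithin hC
    (fun _ hb => hS.connectedComponentIn_sdiff_mem_nhdsWithin hK₁ hb)
    ⟨hp.1, mem_connectedComponentIn hp⟩
  exact (connectedComponentIn_subset _ _ (hSC hqS)).2 hqK

end Convex

lemma convex_unitSq : Convex ℝ unitSq := (convex_Icc 0 1).prod (convex_Icc 0 1)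

lemma isClosed_unitSq : IsClosed unitSq := isClosed_Icc.prod isClosed_Icc

lemma botSide_subset_unitSq : botSide ⊆ unitSq :=
  prod_mono_right (singleton_subset_iff.2 ⟨le_rfl, zero_le_one⟩)

lemma topSide_subset_unitSq : topSide ⊆ unitSq :=
  prod_mono_right (singleton_subset_iff.2 ⟨zero_le_one, le_rfl⟩)

lemma mk_zero_mem_botSide {x : ℝ} (hx : x ∈ Icc (0:ℝ) 1) : (x, (0:ℝ)) ∈ botSide := ⟨hx, rfl⟩

lemma mk_one_mem_topSide {x : ℝ} (hx : x ∈ Icc (0:ℝ) 1) : (x, (1:ℝ)) ∈ topSide := ⟨hx, rfl⟩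

def topComponent (K : Set (ℝ × ℝ)) : Set (ℝ × ℝ) := connectedComponentIn (unitSq \ K) (0, 1)

def botComponent (K : Set (ℝ × ℝ)) : Set (ℝ × ℝ) := connectedComponentIn (unitSq \ K) (0, 0)

namespace CrossesHorizontally

variable {K K₁ K₂ : Set (ℝ × ℝ)}

lemma isCompact (hK : CrossesHorizontally K) : IsCompact K := hK.1

lemma isConnected (hK : CrossesHorizontally K) : IsConnected K := hK.2.1

lemma subset_unitSq (hK : CrossesHorizontally K) : K ⊆ unitSq := hK.2.2.1

lemma separates (hK : CrossesHorizontally K) {p q : ℝ × ℝ} (hp : p ∈ botSide)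
    (hq : q ∈ topSide) :
    connectedComponentIn (unitSq \ K) p ≠ connectedComponentIn (unitSq \ K) q :=
  hK.2.2.2.2 p hp q hq

lemma sides_subset_sdiff (hK : CrossesHorizontally K) :
    botSide ∪ topSide ⊆ unitSq \ K := fun _ hp =>
  ⟨union_subset botSide_subset_unitSq topSide_subset_unitSq hp,
    fun hpK => disjoint_left.1 hK.2.2.2.1 hpK hp⟩

lemma slice_nonempty (hK : CrossesHorizontally K) {x : ℝ} (hx : x ∈ Icc (0:ℝ) 1) :
    {y : ℝ | (x, y) ∈ K}.Nonempty := by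
  by_contra hempty
  have hseg : {x} ×ˢ Icc (0:ℝ) 1 ⊆ unitSq \ K := by
    rintro ⟨a, b⟩ ⟨rfl, hb⟩
    exact ⟨⟨hx, hb⟩, fun hab => hempty ⟨b, hab⟩⟩
  have h0 : (x, (0:ℝ)) ∈ {x} ×ˢ Icc (0:ℝ) 1 := ⟨rfl, le_rfl, zero_le_one⟩
  have h1 : (x, (1:ℝ)) ∈ {x} ×ˢ Icc (0:ℝ) 1 := ⟨rfl, zero_le_one, le_rfl⟩
  have h01 := ((convex_singleton x).prod (convex_Icc 0 1)).isPreconnected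
    |>.subset_connectedComponentIn h0 hseg h1
  exact hK.separates (mk_zero_mem_botSide hx) (mk_one_mem_topSide hx)
    (connectedComponentIn_eq h01)

lemma isCompact_slice (hK : CrossesHorizontally K) (x : ℝ) :
    IsCompact {y : ℝ | (x, y) ∈ K} :=
  isCompact_Icc.of_isClosed_subset (hK.isCompact.isClosed.preimage (Continuous.prodMk_right x))
    fun _ hy => (hK.subset_unitSq hy).2

lemma maxHt_mem (hK : CrossesHorizontally K) {x : ℝ} (hx : x ∈ Icc (0:ℝ) 1) :
    (x, maxHt K x) ∈ K :=
  (hK.isCompact_slice x).sSup_mem (hK.slice_nonempty hx)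

lemma le_maxHt (hK : CrossesHorizontally K) {x y : ℝ} (hy : (x, y) ∈ K) : y ≤ maxHt K x :=
  le_csSup (hK.isCompact_slice x).bddAbove hy

lemma mem_topComponent_of_maxHt_lt (hK : CrossesHorizontally K) {x y : ℝ}
    (hx : x ∈ Icc (0:ℝ) 1) (hy : y ≤ 1) (hlt : maxHt K x < y) :
    (x, y) ∈ topComponent K := by
  have hy₀ : 0 ≤ y := (hK.subset_unitSq (hK.maxHt_mem hx)).2.1.trans hlt.le
  have hcol : {x} ×ˢ Icc y 1 ⊆ unitSq \ K := by
    rintro ⟨a, b⟩ ⟨rfl, hb⟩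
    exact ⟨⟨hx, hy₀.trans hb.1, hb.2⟩, fun hab => (hK.le_maxHt hab).not_gt (hlt.trans_le hb.1)⟩
  have hpre : IsPreconnected (topSide ∪ {x} ×ˢ Icc y 1) :=
    ((convex_Icc (0:ℝ) 1).prod (convex_singleton 1)).isPreconnected.union (x, 1)
      (mk_one_mem_topSide hx) ⟨rfl, hy, le_rfl⟩
      ((convex_singleton x).prod (convex_Icc y 1)).isPreconnected
  exact hpre.subset_connectedComponentIn
    (Or.inl (mk_one_mem_topSide (left_mem_Icc.2 zero_le_one)))
    (union_subset (subset_union_right.trans hK.sides_subset_sdiff) hcol)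
    (Or.inr ⟨rfl, le_rfl, hy⟩)

lemma maxHt_ne_of_disjoint (h₁ : CrossesHorizontally K₁) (h₂ : CrossesHorizontally K₂)
    (hd : Disjoint K₁ K₂) {x : ℝ} (hx : x ∈ Icc (0:ℝ) 1) : maxHt K₁ x ≠ maxHt K₂ x := by
  intro heq
  exact disjoint_left.1 hd (h₁.maxHt_mem hx) (heq ▸ h₂.maxHt_mem hx)

lemma subset_topComponent (h₁ : CrossesHorizontally K₁) (h₂ : CrossesHorizontally K₂)
    (hd : Disjoint K₁ K₂) {x : ℝ} (hx : x ∈ Icc (0:ℝ) 1) (hlt : maxHt K₁ x < maxHt K₂ x) :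
    K₂ ⊆ topComponent K₁ := by
  have htop := h₁.mem_topComponent_of_maxHt_lt hx (h₂.subset_unitSq (h₂.maxHt_mem hx)).2.2 hlt
  rw [topComponent, connectedComponentIn_eq htop]
  exact h₂.isConnected.isPreconnected.subset_connectedComponentIn (h₂.maxHt_mem hx)
    fun p hp => ⟨h₂.subset_unitSq hp, disjoint_right.1 hd hp⟩

lemma botComponent_subset (h₁ : CrossesHorizontally K₁) (h : K₂ ⊆ topComponent K₁) :
    botComponent K₁ ⊆ botComponent K₂ := by
  have hx₀ : (0:ℝ) ∈ Icc (0:ℝ) 1 := left_mem_Icc.2 zero_le_one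
  have hsep : Disjoint (botComponent K₁) (topComponent K₁) :=
    disjoint_connectedComponentIn_of_ne (h₁.separates (mk_zero_mem_botSide hx₀)
      (mk_one_mem_topSide hx₀))
  exact isPreconnected_connectedComponentIn.subset_connectedComponentIn
    (mem_connectedComponentIn (h₁.sides_subset_sdiff (Or.inl (mk_zero_mem_botSide hx₀))))
    fun p hp => ⟨(connectedComponentIn_subset _ _ hp).1, fun hpK => disjoint_left.1 hsep hp (h hpK)⟩

lemma maxHt_lt_of_lt (h₁ : CrossesHorizontally K₁) (h₂ : CrossesHorizontally K₂)
    (hd : Disjoint K₁ K₂) {x₀ : ℝ} (hx₀ : x₀ ∈ Icc (0:ℝ) 1) (hlt : maxHt K₁ x₀ < maxHt K₂ x₀)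
    {x : ℝ} (hx : x ∈ Icc (0:ℝ) 1) : maxHt K₁ x < maxHt K₂ x := by
  refine (h₁.maxHt_ne_of_disjoint h₂ hd hx).lt_or_gt.resolve_right fun hgt => ?_
  have hbot : botComponent K₁ = botComponent K₂ :=
    (h₁.botComponent_subset (h₁.subset_topComponent h₂ hd hx₀ hlt)).antisymm
      (h₂.botComponent_subset (h₂.subset_topComponent h₁ hd.symm hx hgt))
  obtain ⟨y, hy⟩ := h₁.slice_nonempty hx
  have horigin : ((0:ℝ), (0:ℝ)) ∈ unitSq \ K₁ :=
    h₁.sides_subset_sdiff (Or.inl (mk_zero_mem_botSide (left_mem_Icc.2 zero_le_one)))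
  exact convex_unitSq.connectedComponentIn_sdiff_ne_of_disjoint isClosed_unitSq
    h₁.isCompact.isClosed hd
    ⟨_, h₁.subset_unitSq hy, hy⟩ horigin hbot

end CrossesHorizontally

/-- On a family `𝒦` of pairwise disjoint continua horizontally crossing the
unit square, the relation `≺` (comparison of maximal heights over some, equivalently every,
vertical segment) is a strict total order: irreflexive, transitive, total on distinct
elements, and independent of the vertical segment used. -/
theorem htLT_strict_total_order
    (𝒦 : Set (Set (ℝ × ℝ)))
    (hcross : ∀ K ∈ 𝒦, CrossesHorizontally K)
    (hdisj : 𝒦.Pairwise Disjoint) :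
    (∀ K ∈ 𝒦, ¬ HtLT K K) ∧
    (∀ K₁ ∈ 𝒦, ∀ K₂ ∈ 𝒦, ∀ K₃ ∈ 𝒦, HtLT K₁ K₂ → HtLT K₂ K₃ → HtLT K₁ K₃) ∧
    (∀ K₁ ∈ 𝒦, ∀ K₂ ∈ 𝒦, K₁ ≠ K₂ → HtLT K₁ K₂ ∨ HtLT K₂ K₁) ∧
    (∀ K₁ ∈ 𝒦, ∀ K₂ ∈ 𝒦, HtLT K₁ K₂ → ∀ x ∈ Icc (0:ℝ) 1, maxHt K₁ x < maxHt K₂ x) := by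
  have hlt_everywhere : ∀ K₁ ∈ 𝒦, ∀ K₂ ∈ 𝒦, HtLT K₁ K₂ →
      ∀ x ∈ Icc (0:ℝ) 1, maxHt K₁ x < maxHt K₂ x := by
    rintro K₁ h₁ K₂ h₂ ⟨x₀, hx₀, hlt⟩ x hx
    have hne : K₁ ≠ K₂ := by
      rintro rfl
      exact lt_irrefl _ hlt
    exact (hcross K₁ h₁).maxHt_lt_of_lt (hcross K₂ h₂) (hdisj h₁ h₂ hne) hx₀ hlt hx
  refine ⟨fun K _ ⟨_, _, h⟩ => lt_irrefl _ h, ?_, ?_, hlt_everywhere⟩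
  · rintro K₁ _ K₂ h₂ K₃ h₃ ⟨x, hx, h₁₂⟩ h₂₃
    exact ⟨x, hx, h₁₂.trans (hlt_everywhere K₂ h₂ K₃ h₃ h₂₃ x hx)⟩
  · intro K₁ h₁ K₂ h₂ hne
    have hx₀ : (0:ℝ) ∈ Icc (0:ℝ) 1 := left_mem_Icc.2 zero_le_one
    exact ((hcross K₁ h₁).maxHt_ne_of_disjoint (hcross K₂ h₂) (hdisj h₁ h₂ hne) hx₀).lt_or_gt.imp
      (fun h => ⟨0, hx₀, h⟩) (fun h => ⟨0, hx₀, h⟩)
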